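/- Let n ≥ 2, a ∈ ℝ and let u be a Schwartz function on ℝⁿ. Then for every ξ = (ξ', ξ_n) ∈ ℝ^{n-1} × ℝ, 𝓕(Δ_a u)(ξ) = |ξ|² ∂²(𝓕u)/∂ξ_n²(ξ) − (a−4) ξ_n ∂(𝓕u)/∂ξ_n(ξ) + (2−a) 𝓕u(ξ). -/

import Mathlib

/-!
Realise `ft n` as the vector Fourier integral for the character `𝐞 t = exp (2πit)`, the pairing
`(2π)⁻¹ x·ξ` and the measure `(2π)^{-n/2} vol`. For Schwartz functions the derivative `∂_v` then
becomes multiplication by `i v·ξ`, and `∂/∂ξ_n` becomes the transform of multiplication by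
`-i x_n`. By the Leibniz rule,
`Δ_a u = Σ_j ∂_j²(x_n² u) + ∂_n²(x_n² u) + (a - 4) ∂_n(x_n u) + (2 - a) u`,
and transforming this term by term gives the formula.
-/

open MeasureTheory

/-- Directional derivative: `pd v u x = (fderiv ℝ u x) v`. -/
noncomputable def pd {E F : Type*} [NormedAddCommGroup E] [NormedSpace ℝ E]
    [NormedAddCommGroup F] [NormedSpace ℝ F] (v : E) (u : E → F) (x : E) : F :=
  fderiv ℝ u x v

/-- The operator `Δ_a u = x_n² Δu + a x_n ∂u/∂x_n` on `ℝⁿ = ℝ^{m} × ℝ` (complex valued). -/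
noncomputable def deltaA (m : ℕ) (a : ℝ) (u : (Fin m → ℝ) × ℝ → ℂ)
    (x : (Fin m → ℝ) × ℝ) : ℂ :=
  ((x.2 ^ 2 : ℝ) : ℂ) *
      ((∑ j, pd (Pi.single j 1, (0 : ℝ)) (pd (Pi.single j 1, (0 : ℝ)) u) x)
        + pd ((0 : Fin m → ℝ), (1 : ℝ)) (pd ((0 : Fin m → ℝ), (1 : ℝ)) u) x)
    + ((a * x.2 : ℝ) : ℂ) * pd ((0 : Fin m → ℝ), (1 : ℝ)) u x

/-- The Fourier transform `𝓕u(ξ) = (2π)^{-n/2} ∫ e^{-i x·ξ} u(x) dx` on `ℝⁿ = ℝ^{n-1} × ℝ`. -/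
noncomputable def ft (n : ℕ) (u : (Fin (n - 1) → ℝ) × ℝ → ℂ)
    (ξ : (Fin (n - 1) → ℝ) × ℝ) : ℂ :=
  (((2 * Real.pi) ^ (-((n : ℝ) / 2)) : ℝ) : ℂ) *
    ∫ x : (Fin (n - 1) → ℝ) × ℝ,
      Complex.exp (-Complex.I * (((∑ j, x.1 j * ξ.1 j) + x.2 * ξ.2 : ℝ) : ℂ)) * u x

open SchwartzMap LineDeriv VectorFourier Complex Real
open scoped FourierTransform

namespace SchwartzMap

section LineDeriv

variable {V E : Type*} [NormedAddCommGroup V] [NormedSpace ℝ V]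
  [NormedAddCommGroup E] [NormedSpace ℝ E]

theorem pd_coe_eq_lineDerivOp (v : V) (f : 𝓢(V, E)) : pd v ⇑f = ⇑(∂_{v} f : 𝓢(V, E)) :=
  funext fun x => (lineDerivOp_apply_eq_fderiv v f x).symm

theorem lineDerivOp_smulLeftCLM_clm {𝕜 : Type*} [RCLike 𝕜] [NormedSpace 𝕜 E]
    (ℓ : V →L[ℝ] 𝕜) (f : 𝓢(V, E)) (v : V) :
    ∂_{v} (smulLeftCLM E ℓ f) = smulLeftCLM E ℓ (∂_{v} f) + ℓ v • f := by
  ext x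
  have hℓ := ℓ.hasTemperateGrowth
  have hderiv : HasFDerivAt (fun y => ℓ y • f y) (ℓ x • fderiv ℝ f x + ℓ.smulRight (f x)) x :=
    ℓ.hasFDerivAt.smul (f.hasFDerivAt x)
  simp [lineDerivOp_apply_eq_fderiv, smulLeftCLM_apply hℓ, hderiv.fderiv, hℓ]

end LineDeriv

section Fourier

variable {V W E : Type*} [NormedAddCommGroup V] [NormedSpace ℝ V] [FiniteDimensional ℝ V]
  [MeasurableSpace V] [BorelSpace V] [NormedAddCommGroup W] [NormedSpace ℝ W]
  [NormedAddCommGroup E] [NormedSpace ℂ E]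
  (μ : Measure V) [μ.IsAddHaarMeasure] (L : V →L[ℝ] W →L[ℝ] ℝ)

noncomputable def fourierIntegralLM : 𝓢(V, E) →ₗ[ℂ] W → E where
  toFun f := fourierIntegral 𝐞 μ L.toLinearMap₁₂ f
  map_add' f g := fourierIntegral_add continuous_fourierChar L.continuous₂ f.integrable g.integrable
  map_smul' c _ := fourierIntegral_const_smul _ _ _ _ c

theorem fourierIntegralLM_apply (f : 𝓢(V, E)) :
    fourierIntegralLM μ L f = fourierIntegral 𝐞 μ L.toLinearMap₁₂ f := rfl

variable {μ L}

theorem fourierIntegralLM_lineDerivOp (f : 𝓢(V, E)) (v : V) (w : W) :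
    fourierIntegralLM μ L (∂_{v} f) w = (2 * π * I * L v w) • fourierIntegralLM μ L f w := by
  have hf' : Integrable (fderiv ℝ f) μ := (fderivCLM ℝ V E f).integrable
  have hv : ⇑(∂_{v} f : 𝓢(V, E)) = fun x => fderiv ℝ f x v :=
    funext (lineDerivOp_apply_eq_fderiv v f)
  rw [fourierIntegralLM_apply, hv,
    ← fourierIntegral_continuousLinearMap_apply continuous_fourierChar hf',
    fourierIntegral_fderiv L f.integrable f.differentiable hf']
  simp only [fourierSMulRight_apply, neg_apply, ContinuousLinearMap.flip_apply, neg_smul, smul_neg,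
    ← coe_smul, smul_smul, neg_mul, neg_neg]
  rfl

theorem pd_fourierIntegralLM (f : 𝓢(V, E)) (y : W) :
    pd y (fourierIntegralLM μ L f)
      = fourierIntegralLM μ L (-(2 * π * I) • smulLeftCLM E (L.flip y) f) := by
  have hf' : Integrable (fun x => ‖x‖ * ‖f x‖) μ := by simpa using f.integrable_pow_mul μ 1
  have hS : Integrable (fourierSMulRight L f) μ := (-(2 * π * I) • smulRightCLM ℂ E L f).integrable
  ext w
  rw [pd, fourierIntegralLM_apply, fderiv_fourierIntegral L f.integrable hf',
    fourierIntegral_continuousLinearMap_apply continuous_fourierChar hS, fourierIntegralLM_apply]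
  congr 1
  ext x
  simp [smulLeftCLM_apply_apply (L.flip y).hasTemperateGrowth]

end Fourier
end SchwartzMap

section Coordinates

variable {m : ℕ}

noncomputable def mulLast (m : ℕ) : 𝓢((Fin m → ℝ) × ℝ, ℂ) →L[ℂ] 𝓢((Fin m → ℝ) × ℝ, ℂ) :=
  smulLeftCLM ℂ ⇑(ofRealCLM ∘L ContinuousLinearMap.snd ℝ (Fin m → ℝ) ℝ)

@[simp] theorem mulLast_apply (f : 𝓢((Fin m → ℝ) × ℝ, ℂ)) (x : (Fin m → ℝ) × ℝ) :
    mulLast m f x = x.2 * f x := by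
  simp [mulLast, (ofRealCLM ∘L ContinuousLinearMap.snd ℝ (Fin m → ℝ) ℝ).hasTemperateGrowth]

theorem lineDerivOp_mulLast (v : (Fin m → ℝ) × ℝ) (f : 𝓢((Fin m → ℝ) × ℝ, ℂ)) :
    ∂_{v} (mulLast m f) = mulLast m (∂_{v} f) + (v.2 : ℂ) • f :=
  lineDerivOp_smulLeftCLM_clm _ f v

theorem deltaA_eq (a : ℝ) (u : 𝓢((Fin m → ℝ) × ℝ, ℂ)) :
    deltaA m a u =
      ⇑((∑ j : Fin m, ∂_{((Pi.single j 1 : Fin m → ℝ), (0 : ℝ))}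
            (∂_{((Pi.single j 1 : Fin m → ℝ), (0 : ℝ))} (mulLast m (mulLast m u))))
        + ∂_{((0 : Fin m → ℝ), (1 : ℝ))} (∂_{((0 : Fin m → ℝ), (1 : ℝ))} (mulLast m (mulLast m u)))
        + ((a : ℂ) - 4) • ∂_{((0 : Fin m → ℝ), (1 : ℝ))} (mulLast m u) + (2 - (a : ℂ)) • u) := by
  simp only [lineDerivOp_mulLast, LineDerivAdd.lineDerivOp_add, LineDerivSMul.lineDerivOp_smul,
    map_add, map_smul]
  ext x
  simp only [deltaA, ofReal_pow, pd_coe_eq_lineDerivOp, ofReal_mul, ofReal_zero, zero_smul,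
    add_zero, ofReal_one, one_smul, smul_add, add_apply, sum_apply, mulLast_apply, ← mul_assoc,
    ← pow_two, smul_apply, smul_eq_mul]
  rw [← Finset.mul_sum]
  ring

noncomputable def dotProductCLM (m : ℕ) : ((Fin m → ℝ) × ℝ) →L[ℝ] ((Fin m → ℝ) × ℝ) →L[ℝ] ℝ :=
  ∑ j, ((ContinuousLinearMap.proj j).comp (ContinuousLinearMap.fst ℝ _ ℝ)).smulRight
      ((ContinuousLinearMap.proj j).comp (ContinuousLinearMap.fst ℝ _ ℝ))
    + (ContinuousLinearMap.snd ℝ _ ℝ).smulRight (ContinuousLinearMap.snd ℝ _ ℝ)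

@[simp] theorem dotProductCLM_apply (x ξ : (Fin m → ℝ) × ℝ) :
    dotProductCLM m x ξ = ∑ j, x.1 j * ξ.1 j + x.2 * ξ.2 := by
  simp [dotProductCLM]

theorem dotProductCLM_single (j : Fin m) (ξ : (Fin m → ℝ) × ℝ) :
    dotProductCLM m (Pi.single j 1, 0) ξ = ξ.1 j := by
  simp [Pi.single_apply]

theorem dotProductCLM_last (ξ : (Fin m → ℝ) × ℝ) : dotProductCLM m (0, 1) ξ = ξ.2 := by
  simp

end Coordinates

noncomputable def ftMeasure (n : ℕ) : Measure ((Fin (n - 1) → ℝ) × ℝ) :=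
  ENNReal.ofReal ((2 * π) ^ (-((n : ℝ) / 2))) • volume

instance (n : ℕ) : (ftMeasure n).IsAddHaarMeasure :=
  have : (volume : Measure ((Fin (n - 1) → ℝ) × ℝ)).IsAddHaarMeasure :=
    Measure.prod.instIsAddHaarMeasure volume volume
  .smul _ (by simp; positivity) ENNReal.ofReal_ne_top

noncomputable def ftLM (n : ℕ) : 𝓢((Fin (n - 1) → ℝ) × ℝ, ℂ) →ₗ[ℂ] (Fin (n - 1) → ℝ) × ℝ → ℂ :=
  fourierIntegralLM (ftMeasure n) ((2 * π)⁻¹ • dotProductCLM (n - 1))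

theorem ft_eq_ftLM (n : ℕ) (f : 𝓢((Fin (n - 1) → ℝ) × ℝ, ℂ)) : ft n f = ftLM n f := by
  ext ξ
  rw [ftLM, fourierIntegralLM_apply, fourierIntegral, ftMeasure, integral_smul_measure,
    ENNReal.toReal_ofReal (by positivity), ft, real_smul]
  congr 1
  refine integral_congr_ae (ae_of_all _ fun x => ?_)
  simp only [Circle.smul_def, fourierChar_apply, smul_eq_mul,
    ContinuousLinearMap.toLinearMap₁₂_apply_apply_apply, FunLike.coe_smul, Pi.smul_apply,
    dotProductCLM_apply]
  congr 2
  field_simp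
  push_cast
  ring

theorem ftLM_lineDerivOp (n : ℕ) (f : 𝓢((Fin (n - 1) → ℝ) × ℝ, ℂ))
    (v ξ : (Fin (n - 1) → ℝ) × ℝ) :
    ftLM n (∂_{v} f) ξ = I * dotProductCLM (n - 1) v ξ * ftLM n f ξ := by
  rw [ftLM, fourierIntegralLM_lineDerivOp, smul_eq_mul]
  simp only [FunLike.coe_smul, Pi.smul_apply, smul_eq_mul]
  push_cast
  field_simp

theorem pd_ftLM (n : ℕ) (f : 𝓢((Fin (n - 1) → ℝ) × ℝ, ℂ)) :
    pd ((0 : Fin (n - 1) → ℝ), (1 : ℝ)) (ftLM n f) = ftLM n (-I • mulLast (n - 1) f) := by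
  rw [ftLM, pd_fourierIntegralLM]
  congr 1
  ext x
  rw [smul_apply, smul_apply, mulLast_apply,
    smulLeftCLM_apply_apply (ContinuousLinearMap.hasTemperateGrowth _)]
  simp only [ContinuousLinearMap.flip_apply, FunLike.coe_smul, Pi.smul_apply, dotProductCLM_apply,
    Pi.zero_apply, mul_zero, Finset.sum_const_zero, mul_one, zero_add, smul_eq_mul, real_smul]
  push_cast
  field_simp

theorem statement3_general (n : ℕ) (a : ℝ)
    (u : SchwartzMap ((Fin (n - 1) → ℝ) × ℝ) ℂ) (ξ : (Fin (n - 1) → ℝ) × ℝ) :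
    ft n (deltaA (n - 1) a u) ξ
      = ((((∑ j, ξ.1 j ^ 2) + ξ.2 ^ 2 : ℝ)) : ℂ) *
          pd ((0 : Fin (n - 1) → ℝ), (1 : ℝ)) (pd ((0 : Fin (n - 1) → ℝ), (1 : ℝ)) (ft n u)) ξ
        - (((a - 4) * ξ.2 : ℝ) : ℂ) * pd ((0 : Fin (n - 1) → ℝ), (1 : ℝ)) (ft n u) ξ
        + ((2 - a : ℝ) : ℂ) * ft n u ξ := by
  rw [deltaA_eq, ft_eq_ftLM, ft_eq_ftLM, pd_ftLM, pd_ftLM]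
  simp only [map_add, map_sum, map_smul, Pi.add_apply, Finset.sum_apply, Pi.smul_apply,
    smul_eq_mul, ftLM_lineDerivOp, dotProductCLM_single, dotProductCLM_last]
  push_cast
  simp_rw [show ∀ c F : ℂ, I * c * (I * c * F) = c ^ 2 * (-I * (-I * F)) from fun c F => by ring]
  rw [add_mul, Finset.sum_mul]
  ring

/-- For a Schwartz function `u` on `ℝⁿ`,
`𝓕(Δ_a u)(ξ) = |ξ|² ∂²𝓕u/∂ξ_n² − (a−4) ξ_n ∂𝓕u/∂ξ_n + (2−a) 𝓕u(ξ)`. -/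
theorem statement3 (n : ℕ) (hn : 2 ≤ n) (a : ℝ)
    (u : SchwartzMap ((Fin (n - 1) → ℝ) × ℝ) ℂ) (ξ : (Fin (n - 1) → ℝ) × ℝ) :
    ft n (deltaA (n - 1) a u) ξ
      = ((((∑ j, ξ.1 j ^ 2) + ξ.2 ^ 2 : ℝ)) : ℂ) *
          pd ((0 : Fin (n - 1) → ℝ), (1 : ℝ)) (pd ((0 : Fin (n - 1) → ℝ), (1 : ℝ)) (ft n u)) ξ
        - (((a - 4) * ξ.2 : ℝ) : ℂ) * pd ((0 : Fin (n - 1) → ℝ), (1 : ℝ)) (ft n u) ξ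
        + ((2 - a : ℝ) : ℂ) * ft n u ξ :=
  statement3_general n a u ξ
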